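/- |C(V, Nk)| = ( Σ_{u ∈ Ni \ Nk} |A(Ri, Ni, u)| + |C(Ri, Ni)| ) · ( Σ_{u ∈ Nj \ Nk} |A(Rj, Nj, u)| + |C(Rj, Nj)| ). (The cardinality recurrence for C used in the counting algorithm.) -/
import Mathlib


variable {V : Type*}

/-- `u` is dominated by the set `S`: some `s ∈ S` equals `u` or is adjacent to `u`. -/
def DomBy (G : SimpleGraph V) (S : Finset V) (u : V) : Prop :=
  ∃ s ∈ S, s = u ∨ G.Adj s u

/-- `S` dominates `U`. -/
def Dominates (G : SimpleGraph V) (S U : Finset V) : Prop :=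
  ∀ u ∈ U, DomBy G S u

variable [LinearOrder V]

/-- `𝒮(R,N)`: subsets of the region `R` dominating `R \ N`. -/
def Scol (G : SimpleGraph V) (R N : Finset V) : Set (Finset V) :=
  {S | S ⊆ R ∧ Dominates G S (R \ N)}

/-- `A(R,N,v)`: members of `𝒮(R,N)` whose intersection with `N` is nonempty with maximum `v`. -/
def setA (G : SimpleGraph V) (R N : Finset V) (v : V) : Set (Finset V) :=
  {S | S ∈ Scol G R N ∧ v ∈ S ∩ N ∧ ∀ u ∈ S ∩ N, u ≤ v}

/-- `B(R,N,v)`: members of `𝒮(R,N)` disjoint from `N`, with `v` the minimum vertex of `N`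
not dominated. -/
def setB (G : SimpleGraph V) (R N : Finset V) (v : V) : Set (Finset V) :=
  {S | S ∈ Scol G R N ∧ S ∩ N = ∅ ∧ v ∈ N ∧ ¬ DomBy G S v ∧ ∀ u ∈ N, ¬ DomBy G S u → v ≤ u}

/-- `C(R,N)`: members of `𝒮(R,N)` disjoint from `N` that dominate all of `N`. -/
def setC (G : SimpleGraph V) (R N : Finset V) : Set (Finset V) :=
  {S | S ∈ Scol G R N ∧ S ∩ N = ∅ ∧ Dominates G S N}

/- ### Auxiliary material -/

private lemma ncard_prod' {α β : Type*} (s : Set α) (t : Set β) :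
    (s ×ˢ t).ncard = s.ncard * t.ncard := by
  rw [← Nat.card_coe_set_eq, ← Nat.card_coe_set_eq, ← Nat.card_coe_set_eq,
    ← Nat.card_prod]
  exact Nat.card_congr (Equiv.Set.prod s t)

private lemma ncard_finset_biUnion {α β : Type*} [Finite β] (t : Finset α) (f : α → Set β)
    (h : ∀ a ∈ t, ∀ b ∈ t, a ≠ b → Disjoint (f a) (f b)) :
    (⋃ a ∈ t, f a).ncard = ∑ a ∈ t, (f a).ncard := by
  classical
  induction t using Finset.induction with
  | empty => simp
  | @insert x s hx ih =>
    rw [Finset.sum_insert hx]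
    have heq : (⋃ a ∈ insert x s, f a) = f x ∪ ⋃ a ∈ s, f a := by
      simp [Set.iUnion_or, Set.iUnion_union_distrib]
    rw [heq, Set.ncard_union_eq ?_ (Set.toFinite _) (Set.toFinite _),
      ih (fun a ha b hb => h a (Finset.mem_insert_of_mem ha) b (Finset.mem_insert_of_mem hb))]
    simp only [Set.disjoint_iUnion_right]
    intro a ha
    exact h x (Finset.mem_insert_self x s) a (Finset.mem_insert_of_mem ha)
      (fun hxa => hx (hxa ▸ ha))

/-- The "good" family on one side: subsets of `R` dominating `R \ N` and `N`, avoiding `K`. -/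
private def setD (G : SimpleGraph V) (R N K : Finset V) : Set (Finset V) :=
  {S | S ⊆ R ∧ Dominates G S (R \ N) ∧ S ∩ K = ∅ ∧ Dominates G S N}

private lemma setD_card [Fintype V] (G : SimpleGraph V) (R N K : Finset V)
    (hclique : G.IsClique (N : Set V))
    (hKN : ∀ x ∈ K, x ∈ R → x ∈ N)
    (hord : ∀ u ∈ N, u ∉ K → ∀ w ∈ K, u < w) :
    (setD G R N K).ncard = (∑ u ∈ N \ K, (setA G R N u).ncard) + (setC G R N).ncard := by
  classical
  have hdecomp : setD G R N K = (⋃ u ∈ N \ K, setA G R N u) ∪ setC G R N := by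
    ext S
    constructor
    · rintro ⟨hSR, hdom, hSK, hdomN⟩
      by_cases hSN : S ∩ N = ∅
      · exact Or.inr ⟨⟨hSR, hdom⟩, hSN, hdomN⟩
      · left
        have hne : (S ∩ N).Nonempty := Finset.nonempty_iff_ne_empty.2 hSN
        have humem : (S ∩ N).max' hne ∈ S ∩ N := (S ∩ N).max'_mem hne
        set u := (S ∩ N).max' hne with hu
        have huS : u ∈ S := (Finset.mem_inter.1 humem).1
        have huN : u ∈ N := (Finset.mem_inter.1 humem).2
        have huK : u ∉ K := fun hk =>
          (Finset.notMem_empty u) (hSK ▸ Finset.mem_inter.2 ⟨huS, hk⟩)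
        have humemNK : u ∈ ((N \ K : Finset V) : Set V) := by
          simp [Finset.mem_sdiff, huN, huK]
        exact Set.mem_biUnion humemNK
          ⟨⟨hSR, hdom⟩, humem, fun w hw => (S ∩ N).le_max' w hw⟩
    · rintro (hS | hS)
      · obtain ⟨u, hu, hSmem⟩ := Set.mem_iUnion₂.1 hS
        have hu' : u ∈ N \ K := by exact_mod_cast hu
        obtain ⟨huN, huK⟩ := Finset.mem_sdiff.1 hu'
        obtain ⟨⟨hSR, hdom⟩, humem, hmax⟩ := hSmem
        have huS : u ∈ S := (Finset.mem_inter.1 humem).1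
        refine ⟨hSR, hdom, ?_, ?_⟩
        · ext x
          simp only [Finset.mem_inter, Finset.notMem_empty, iff_false, not_and]
          intro hxS hxK
          have hxN : x ∈ N := hKN x hxK (hSR hxS)
          have hle : x ≤ u := hmax x (Finset.mem_inter.2 ⟨hxS, hxN⟩)
          exact absurd (hord u huN huK x hxK) (not_lt.2 hle)
        · intro w hw
          by_cases hwu : w = u
          · exact ⟨u, huS, Or.inl hwu.symm⟩
          · exact ⟨u, huS, Or.inr (hclique huN hw (Ne.symm hwu))⟩
      · obtain ⟨⟨hSR, hdom⟩, hSN, hdomN⟩ := hS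
        refine ⟨hSR, hdom, ?_, hdomN⟩
        ext x
        simp only [Finset.mem_inter, Finset.notMem_empty, iff_false, not_and]
        intro hxS hxK
        have hxSN : x ∈ S ∩ N := Finset.mem_inter.2 ⟨hxS, hKN x hxK (hSR hxS)⟩
        simp [hSN] at hxSN
  have hAdisj : ∀ a ∈ N \ K, ∀ b ∈ N \ K, a ≠ b →
      Disjoint (setA G R N a) (setA G R N b) := by
    intro a _ b _ hab
    rw [Set.disjoint_left]
    rintro S ⟨_, haS, hamax⟩ ⟨_, hbS, hbmax⟩
    exact hab (le_antisymm (hbmax a haS) (hamax b hbS))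
  have hACdisj : Disjoint (⋃ u ∈ N \ K, setA G R N u) (setC G R N) := by
    rw [Set.disjoint_left]
    rintro S hS ⟨_, hSN, _⟩
    obtain ⟨u, _, ⟨_, huS, _⟩⟩ := Set.mem_iUnion₂.1 hS
    simp [hSN] at huS
  rw [hdecomp, Set.ncard_union_eq hACdisj (Set.toFinite _) (Set.toFinite _),
    ncard_finset_biUnion _ _ hAdisj]

/-- The cardinality recurrence for `C` used in the counting algorithm. -/
theorem card_recurrence_C [Fintype V] (G : SimpleGraph V) (Ri Rj Ni Nj Nk : Finset V)
    (hdisj : Disjoint Ri Rj) (huniv : Ri ∪ Rj = Finset.univ)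
    (hNiRi : Ni ⊆ Ri) (hNjRj : Nj ⊆ Rj) (hNk : Nk ⊆ Ni ∪ Nj)
    (hNi : G.IsClique (Ni : Set V)) (hNj : G.IsClique (Nj : Set V))
    (hNkc : G.IsClique (Nk : Set V))
    (hcross : ∀ a ∈ Ri, ∀ b ∈ Rj, G.Adj a b → a ∈ Nk ∧ b ∈ Nk)
    (horder : ∀ u ∈ (Ni ∪ Nj) \ Nk, ∀ w ∈ Nk, u < w) :
    (setC G Finset.univ Nk).ncard =
      ((∑ u ∈ Ni \ Nk, (setA G Ri Ni u).ncard) + (setC G Ri Ni).ncard) *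
      ((∑ u ∈ Nj \ Nk, (setA G Rj Nj u).ncard) + (setC G Rj Nj).ncard) := by
  classical
  have hmemuniv : ∀ v : V, v ∈ Ri ∨ v ∈ Rj := by
    intro v
    have hv : v ∈ Ri ∪ Rj := huniv ▸ Finset.mem_univ v
    exact Finset.mem_union.1 hv
  have hKNi : ∀ x ∈ Nk, x ∈ Ri → x ∈ Ni := by
    intro x hx hxR
    rcases Finset.mem_union.1 (hNk hx) with h | h
    · exact h
    · exact absurd (hNjRj h) (Finset.disjoint_left.1 hdisj hxR)
  have hKNj : ∀ x ∈ Nk, x ∈ Rj → x ∈ Nj := by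
    intro x hx hxR
    rcases Finset.mem_union.1 (hNk hx) with h | h
    · exact absurd hxR (Finset.disjoint_left.1 hdisj (hNiRi h))
    · exact h
  -- the bijection with pairs
  have himg : setC G Finset.univ Nk =
      (fun p : Finset V × Finset V => p.1 ∪ p.2) ''
        ((setD G Ri Ni Nk) ×ˢ (setD G Rj Nj Nk)) := by
    ext S
    constructor
    · rintro ⟨⟨_, hdom⟩, hSK, hdomK⟩
      have hSnk : ∀ s ∈ S, s ∉ Nk := by
        intro s hs hsk
        exact Finset.notMem_empty s (hSK ▸ Finset.mem_inter.2 ⟨hs, hsk⟩)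
      -- dominators stay on the same side
      have hstayi : ∀ u ∈ Ri, DomBy G S u → DomBy G (S ∩ Ri) u := by
        rintro u huR ⟨s, hsS, hsu⟩
        have hsRi : s ∈ Ri := by
          rcases hsu with rfl | hadj
          · exact huR
          · rcases hmemuniv s with hs | hs
            · exact hs
            · exact absurd (hcross u huR s hs hadj.symm).2 (hSnk s hsS)
        exact ⟨s, Finset.mem_inter.2 ⟨hsS, hsRi⟩, hsu⟩
      have hstayj : ∀ u ∈ Rj, DomBy G S u → DomBy G (S ∩ Rj) u := by
        rintro u huR ⟨s, hsS, hsu⟩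
        have hsRj : s ∈ Rj := by
          rcases hsu with rfl | hadj
          · exact huR
          · rcases hmemuniv s with hs | hs
            · exact absurd (hcross s hs u huR hadj).1 (hSnk s hsS)
            · exact hs
        exact ⟨s, Finset.mem_inter.2 ⟨hsS, hsRj⟩, hsu⟩
      have hdomall : ∀ u : V, u ∉ Nk → DomBy G S u := by
        intro u hu
        exact hdom u (Finset.mem_sdiff.2 ⟨Finset.mem_univ u, hu⟩)
      have hSi : S ∩ Ri ∈ setD G Ri Ni Nk := by
        refine ⟨Finset.inter_subset_right, ?_, ?_, ?_⟩
        · intro u hu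
          obtain ⟨huR, huN⟩ := Finset.mem_sdiff.1 hu
          have huK : u ∉ Nk := fun hk => huN (hKNi u hk huR)
          exact hstayi u huR (hdomall u huK)
        · ext x
          simp only [Finset.mem_inter, Finset.notMem_empty, iff_false, not_and, and_imp]
          intro hxS _
          exact hSnk x hxS
        · intro u huN
          by_cases huK : u ∈ Nk
          · exact hstayi u (hNiRi huN) (hdomK u huK)
          · exact hstayi u (hNiRi huN) (hdomall u huK)
      have hSj : S ∩ Rj ∈ setD G Rj Nj Nk := by
        refine ⟨Finset.inter_subset_right, ?_, ?_, ?_⟩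
        · intro u hu
          obtain ⟨huR, huN⟩ := Finset.mem_sdiff.1 hu
          have huK : u ∉ Nk := fun hk => huN (hKNj u hk huR)
          exact hstayj u huR (hdomall u huK)
        · ext x
          simp only [Finset.mem_inter, Finset.notMem_empty, iff_false, not_and, and_imp]
          intro hxS _
          exact hSnk x hxS
        · intro u huN
          by_cases huK : u ∈ Nk
          · exact hstayj u (hNjRj huN) (hdomK u huK)
          · exact hstayj u (hNjRj huN) (hdomall u huK)
      refine ⟨⟨S ∩ Ri, S ∩ Rj⟩, ⟨hSi, hSj⟩, ?_⟩
      simp only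
      rw [← Finset.inter_union_distrib_left, huniv, Finset.inter_univ]
    · rintro ⟨⟨Si, Sj⟩, ⟨⟨hSiR, hSidom, hSiK, hSidomN⟩, hSjR, hSjdom, hSjK, hSjdomN⟩, rfl⟩
      simp only at *
      have hdomi : ∀ u ∈ Ri, DomBy G (Si ∪ Sj) u := by
        intro u hu
        have hd : DomBy G Si u := by
          by_cases huN : u ∈ Ni
          · exact hSidomN u huN
          · exact hSidom u (Finset.mem_sdiff.2 ⟨hu, huN⟩)
        obtain ⟨s, hs, hsu⟩ := hd
        exact ⟨s, Finset.mem_union_left _ hs, hsu⟩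
      have hdomj : ∀ u ∈ Rj, DomBy G (Si ∪ Sj) u := by
        intro u hu
        have hd : DomBy G Sj u := by
          by_cases huN : u ∈ Nj
          · exact hSjdomN u huN
          · exact hSjdom u (Finset.mem_sdiff.2 ⟨hu, huN⟩)
        obtain ⟨s, hs, hsu⟩ := hd
        exact ⟨s, Finset.mem_union_right _ hs, hsu⟩
      have hdomall : ∀ u : V, DomBy G (Si ∪ Sj) u := by
        intro u
        rcases hmemuniv u with h | h
        · exact hdomi u h
        · exact hdomj u h
      refine ⟨⟨Finset.subset_univ _, fun u _ => hdomall u⟩, ?_, fun u _ => hdomall u⟩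
      rw [Finset.union_inter_distrib_right, hSiK, hSjK, Finset.union_empty]
  -- injectivity
  have hinj : Set.InjOn (fun p : Finset V × Finset V => p.1 ∪ p.2)
      ((setD G Ri Ni Nk) ×ˢ (setD G Rj Nj Nk)) := by
    rintro ⟨a, b⟩ ⟨ha, hb⟩ ⟨c, d⟩ ⟨hc, hd⟩ h
    simp only at h
    have hrec : ∀ (x y : Finset V), x ⊆ Ri → y ⊆ Rj → (x ∪ y) ∩ Ri = x := by
      intro x y hx hy
      ext v
      simp only [Finset.mem_inter, Finset.mem_union]
      constructor
      · rintro ⟨hv | hv, hvR⟩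
        · exact hv
        · exact absurd (hy hv) (Finset.disjoint_left.1 hdisj hvR)
      · exact fun hv => ⟨Or.inl hv, hx hv⟩
    have hrec2 : ∀ (x y : Finset V), x ⊆ Ri → y ⊆ Rj → (x ∪ y) ∩ Rj = y := by
      intro x y hx hy
      ext v
      simp only [Finset.mem_inter, Finset.mem_union]
      constructor
      · rintro ⟨hv | hv, hvR⟩
        · exact absurd hvR (Finset.disjoint_left.1 hdisj (hx hv))
        · exact hv
      · exact fun hv => ⟨Or.inr hv, hy hv⟩
    have h1 : a = c := by
      rw [← hrec a b ha.1 hb.1, ← hrec c d hc.1 hd.1, h]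
    have h2 : b = d := by
      rw [← hrec2 a b ha.1 hb.1, ← hrec2 c d hc.1 hd.1, h]
    simp [h1, h2]
  rw [himg, Set.ncard_image_of_injOn hinj, ncard_prod',
    setD_card G Ri Ni Nk hNi hKNi
      (fun u hu huk w hw => horder u (Finset.mem_sdiff.2 ⟨Finset.mem_union_left _ hu, huk⟩) w hw),
    setD_card G Rj Nj Nk hNj hKNj
      (fun u hu huk w hw => horder u (Finset.mem_sdiff.2 ⟨Finset.mem_union_right _ hu, huk⟩) w hw)]
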